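/- Let Φ be the cumulative distribution function of the standard normal distribution. Then the functions a ↦ log Φ(a) and a ↦ log(1 − Φ(a)) are concave on ℝ. Consequently, for each y ∈ {0,1}, the probit log-likelihood contribution a ↦ y log Φ(a) + (1−y) log(1−Φ(a)) is concave on ℝ. -/

import Mathlib

/-!
Since `1 - Φ(a) = Φ(-a)`, everything reduces to the concavity of `log Φ`, that is, to the ratio
`φ/Φ` being nonincreasing. Its derivative is `-φ (aΦ + φ) / Φ²`, and `φ' = -tφ` turns
`aΦ(a) + φ(a)` into `∫_{-∞}^a (a - t) φ(t) dt ≥ 0`.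
-/

open MeasureTheory ProbabilityTheory Real Set Filter

/-- The standard normal cumulative distribution function
`Φ(a) = ∫_{−∞}^a (2π)^{−1/2} e^{−t²/2} dt`. -/
noncomputable def stdNormalCDF (a : ℝ) : ℝ :=
  ∫ t in Set.Iic a, (Real.sqrt (2 * Real.pi))⁻¹ * Real.exp (-(t ^ 2) / 2)

theorem hasDerivAt_integral_Iic {E : Type*} [NormedAddCommGroup E] [NormedSpace ℝ E]
    [CompleteSpace E] {f : ℝ → E} (hf : Continuous f) (hfi : Integrable f) (a : ℝ) :
    HasDerivAt (fun x => ∫ t in Iic x, f t) (f a) a := by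
  have hsplit : ∀ x, ∫ t in Iic x, f t = (∫ t in Iic 0, f t) + ∫ t in (0 : ℝ)..x, f t :=
    fun x => by
      rw [← intervalIntegral.integral_Iic_sub_Iic hfi.integrableOn hfi.integrableOn]
      abel
  exact ((intervalIntegral.integral_hasDerivAt_right hfi.intervalIntegrable
    (hf.stronglyMeasurableAtFilter _ _) hf.continuousAt).const_add _).congr_of_eventuallyEq
    (Eventually.of_forall hsplit)

namespace ProbabilityTheory

theorem hasDerivAt_gaussianPDFReal (μ : ℝ) (v : NNReal) (x : ℝ) :
    HasDerivAt (gaussianPDFReal μ v) (-(x - μ) / v * gaussianPDFReal μ v x) x := by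
  have h : HasDerivAt (fun y => -(y - μ) ^ 2 / (2 * v)) (-(x - μ) / v) x :=
    ((((hasDerivAt_id x).sub_const μ).pow 2).neg.div_const (2 * (v : ℝ))).congr_deriv
      (by simp only [id_eq]; ring)
  exact (h.exp.const_mul (√(2 * π * v))⁻¹).congr_deriv (by rw [gaussianPDFReal]; ring)

theorem continuous_gaussianPDFReal (μ : ℝ) (v : NNReal) : Continuous (gaussianPDFReal μ v) :=
  continuous_iff_continuousAt.2 fun x => (hasDerivAt_gaussianPDFReal μ v x).continuousAt

end ProbabilityTheory

local notation "φ" => gaussianPDFReal 0 1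

theorem stdNormalCDF_eq_setIntegral (a : ℝ) : stdNormalCDF a = ∫ t in Iic a, φ t := by
  simp [stdNormalCDF, gaussianPDFReal]

theorem integrable_mul_gaussianPDFReal : Integrable fun t => t * φ t := by
  convert (integrable_mul_exp_neg_mul_sq (b := 1 / 2) (by norm_num)).const_mul (√(2 * π))⁻¹
    using 2 with t
  rw [gaussianPDFReal]
  push_cast
  ring_nf

theorem setIntegral_Iic_mul_gaussianPDFReal (a : ℝ) : ∫ t in Iic a, t * φ t = -φ a := by
  have hderiv (x : ℝ) : HasDerivAt (fun t => -φ t) (x * φ x) x :=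
    (hasDerivAt_gaussianPDFReal 0 1 x).neg.congr_deriv (by simp)
  have hlim : Tendsto (fun t => -φ t) atBot (nhds 0) :=
    tendsto_zero_of_hasDerivAt_of_integrableOn_Iic (a := 0) (fun x _ => hderiv x)
      integrable_mul_gaussianPDFReal.integrableOn (integrable_gaussianPDFReal 0 1).neg.integrableOn
  simpa using integral_Iic_of_hasDerivAt_of_tendsto' (fun x _ => hderiv x)
    integrable_mul_gaussianPDFReal.integrableOn hlim

theorem stdNormalCDF_pos (a : ℝ) : 0 < stdNormalCDF a := by
  rw [stdNormalCDF_eq_setIntegral, setIntegral_pos_iff_support_of_nonneg_ae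
    (ae_of_all _ (gaussianPDFReal_nonneg 0 1)) (integrable_gaussianPDFReal 0 1).integrableOn]
  have : Function.support φ = univ :=
    eq_univ_of_forall fun t => (gaussianPDFReal_pos 0 1 t one_ne_zero).ne'
  simp [this, Real.volume_Iic]

theorem stdNormalCDF_neg (a : ℝ) : stdNormalCDF (-a) = 1 - stdNormalCDF a := by
  have hsymm : ∫ t in Iic (-a), φ t = ∫ t in Ioi a, φ t := by
    rw [← integral_comp_neg_Ioi]
    simp [gaussianPDFReal]
  have htotal := integral_add_compl (measurableSet_Iic (a := a)) (integrable_gaussianPDFReal 0 1)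
  rw [compl_Iic, integral_gaussianPDFReal_eq_one 0 one_ne_zero] at htotal
  rw [stdNormalCDF_eq_setIntegral, stdNormalCDF_eq_setIntegral, hsymm]
  linarith

theorem hasDerivAt_stdNormalCDF (a : ℝ) : HasDerivAt stdNormalCDF (φ a) a := by
  simp_rw [funext stdNormalCDF_eq_setIntegral]
  exact hasDerivAt_integral_Iic (continuous_gaussianPDFReal 0 1) (integrable_gaussianPDFReal 0 1) a

theorem mul_stdNormalCDF_add_gaussianPDFReal_nonneg (a : ℝ) :
    0 ≤ a * stdNormalCDF a + φ a := by
  have hint : a * stdNormalCDF a + φ a = ∫ t in Iic a, (a - t) * φ t := by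
    simp_rw [sub_mul]
    rw [integral_sub ((integrable_gaussianPDFReal 0 1).const_mul a).integrableOn
      integrable_mul_gaussianPDFReal.integrableOn, integral_const_mul,
      setIntegral_Iic_mul_gaussianPDFReal, stdNormalCDF_eq_setIntegral]
    ring
  rw [hint]
  exact setIntegral_nonneg measurableSet_Iic fun t ht =>
    mul_nonneg (sub_nonneg.2 ht) (gaussianPDFReal_nonneg 0 1 t)

theorem antitone_gaussianPDFReal_div_stdNormalCDF : Antitone fun a => φ a / stdNormalCDF a := by
  have hderiv (a : ℝ) : HasDerivAt (fun a => φ a / stdNormalCDF a)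
      (-φ a * (a * stdNormalCDF a + φ a) / stdNormalCDF a ^ 2) a :=
    ((hasDerivAt_gaussianPDFReal 0 1 a).div (hasDerivAt_stdNormalCDF a)
      (stdNormalCDF_pos a).ne').congr_deriv (by push_cast; ring)
  refine antitone_of_deriv_nonpos (fun a => (hderiv a).differentiableAt) fun a => ?_
  rw [(hderiv a).deriv]
  exact div_nonpos_of_nonpos_of_nonneg (mul_nonpos_of_nonpos_of_nonneg
    (neg_nonpos.2 (gaussianPDFReal_nonneg 0 1 a)) (mul_stdNormalCDF_add_gaussianPDFReal_nonneg a))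
    (sq_nonneg _)

theorem concaveOn_log_stdNormalCDF : ConcaveOn ℝ univ fun a => log (stdNormalCDF a) := by
  have hderiv (a : ℝ) : HasDerivAt (fun a => log (stdNormalCDF a)) (φ a / stdNormalCDF a) a :=
    (hasDerivAt_stdNormalCDF a).log (stdNormalCDF_pos a).ne'
  refine Antitone.concaveOn_univ_of_deriv (fun a => (hderiv a).differentiableAt) ?_
  rw [funext fun a => (hderiv a).deriv]
  exact antitone_gaussianPDFReal_div_stdNormalCDF

theorem concaveOn_log_one_sub_stdNormalCDF :
    ConcaveOn ℝ univ fun a => log (1 - stdNormalCDF a) := by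
  simp_rw [← stdNormalCDF_neg]
  exact concaveOn_log_stdNormalCDF.comp_linearMap (-LinearMap.id)

/-- `a ↦ log Φ(a)` and `a ↦ log(1 − Φ(a))` are concave on `ℝ`; consequently, for each
`y ∈ {0,1}` the probit log-likelihood contribution
`a ↦ y log Φ(a) + (1−y) log(1−Φ(a))` is concave on `ℝ`. -/
theorem stmt_18 :
    ConcaveOn ℝ Set.univ (fun a => Real.log (stdNormalCDF a)) ∧
    ConcaveOn ℝ Set.univ (fun a => Real.log (1 - stdNormalCDF a)) ∧
    ∀ y : ℝ, y = 0 ∨ y = 1 →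
      ConcaveOn ℝ Set.univ
        (fun a => y * Real.log (stdNormalCDF a) + (1 - y) * Real.log (1 - stdNormalCDF a)) := by
  refine ⟨concaveOn_log_stdNormalCDF, concaveOn_log_one_sub_stdNormalCDF, ?_⟩
  rintro y (rfl | rfl)
  · simpa using concaveOn_log_one_sub_stdNormalCDF
  · simpa using concaveOn_log_stdNormalCDF
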